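/- For the complete bipartite graph K_{k,n−k} with 1 ≤ k ≤ n−k, the spectral radius of the average connectivity matrix equals (1/(n(n−1)))(√(n² + 4nk³ − 4nk − 4k⁴ + 4k²) + 2nk − n − 2k²). -/

import Mathlib

open Finset

namespace AvgConn

variable {V : Type*} [Fintype V] [DecidableEq V]

/-- There exist `k` pairwise internally disjoint paths from `u` to `v` in `G`. -/
def InternallyDisjointPaths (G : SimpleGraph V) (u v : V) (k : ℕ) : Prop :=
  ∃ p : Fin k → G.Walk u v, Function.Injective p ∧ (∀ i, (p i).IsPath) ∧
    ∀ i j, i ≠ j → ∀ w, w ∈ (p i).support → w ∈ (p j).support → w = u ∨ w = v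

/-- Local connectivity `κ(u,v)`: the maximum number of internally disjoint `u,v`-paths,
with the convention `κ(v,v) = 0`. -/
noncomputable def localConn (G : SimpleGraph V) (u v : V) : ℕ :=
  if u = v then 0 else sSup {k | InternallyDisjointPaths G u v k}

/-- Vertex connectivity `κ(G)`: minimum number of vertices whose deletion leaves a
disconnected or trivial graph. -/
noncomputable def vertexConnectivity (G : SimpleGraph V) : ℕ :=
  sInf {k | ∃ S : Finset V, S.card = k ∧
    (¬ (G.induce ((Sᶜ : Finset V) : Set V)).Connected ∨ (Sᶜ : Finset V).card ≤ 1)}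

/-- The average connectivity matrix: `(u,v)`-entry `κ(u,v) / C(n,2)`. -/
noncomputable def avgConnMatrix (G : SimpleGraph V) : Matrix V V ℝ :=
  Matrix.of fun u v => (localConn G u v : ℝ) / ((Fintype.card V).choose 2 : ℝ)

/-- Transmission of a vertex: `T(v) = (1/C(n,2)) Σ_w κ(v,w)`. -/
noncomputable def transmission (G : SimpleGraph V) (v : V) : ℝ :=
  (∑ w, (localConn G v w : ℝ)) / ((Fintype.card V).choose 2 : ℝ)

/-- Average connectivity `κ̄(G)`: average of `κ(u,v)` over unordered pairs, equivalently the
sum over ordered pairs divided by `n(n-1)`. -/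
noncomputable def avgConn (G : SimpleGraph V) : ℝ :=
  (∑ u, ∑ v, (localConn G u v : ℝ)) / ((Fintype.card V : ℝ) * ((Fintype.card V : ℝ) - 1))

/-- Matching number `α'(G)`: maximum number of edges in a matching. -/
noncomputable def matchingNumber (G : SimpleGraph V) : ℕ :=
  sSup {k | ∃ M : G.Subgraph, M.IsMatching ∧ M.edgeSet.ncard = k}

/-- Spectral radius of a real square matrix: supremum of absolute values of its
(real) eigenvalues. -/
noncomputable def specRad {n : Type*} [Fintype n] [DecidableEq n] (A : Matrix n n ℝ) : ℝ :=
  sSup {r : ℝ | ∃ μ : ℝ, Module.End.HasEigenvalue (Matrix.toLin' A) μ ∧ r = |μ|}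

/-- The join `G ∨ H` of two graphs: all edges of `G`, of `H`, and all edges between. -/
def graphJoin {α β : Type*} (G : SimpleGraph α) (H : SimpleGraph β) : SimpleGraph (α ⊕ β) where
  Adj x y :=
    match x, y with
    | Sum.inl a, Sum.inl a' => G.Adj a a'
    | Sum.inr b, Sum.inr b' => H.Adj b b'
    | _, _ => True
  symm := ⟨by rintro (a | b) (a' | b') h <;> simp_all <;> exact h.symm⟩
  loopless := ⟨by rintro (a | b) h <;> simp_all⟩

/-!
In `K_{k,m}` with `k ≤ m`, two vertices on the same side are joined through every vertex of the
other side, and a vertex of the small side is joined to a vertex of the large side by the edge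
and `k - 1` paths of length three. These families are optimal because each path leaves its start
through its own neighbour. So `κ` is constant on blocks (`m` inside the small side, `k`
elsewhere, `0` on the diagonal) and the matrix has the equitable partition with quotient
`!![(k - 1) m, k m; k², k (m - 1)] / C(n, 2)`. A positive eigenvector of the quotient lifts to a
positive eigenvector of the matrix, and for an entrywise nonnegative matrix the eigenvalue of a
positive eigenvector dominates every real eigenvalue in absolute value.
-/

open SimpleGraph Matrix

theorem _root_.SimpleGraph.Walk.IsPath.eq_cons_nil_of_snd_eq {W : Type*} {H : SimpleGraph W}
    {x y : W} {p : H.Walk x y} (hp : p.IsPath) (hxy : x ≠ y) (hsnd : p.snd = y) :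
    ∃ h : H.Adj x y, p = .cons h .nil := by
  cases p with
  | nil => exact absurd rfl hxy
  | cons h q =>
    rw [Walk.snd_cons] at hsnd
    subst hsnd
    have hq : q.Nil := Walk.isPath_iff_nil.1 ((Walk.cons_isPath_iff h q).1 hp).1
    exact ⟨h, by rw [Walk.eq_nil_iff_nil.2 hq]⟩

section Paths

variable {W : Type*} {G : SimpleGraph W} {u v : W} {c : ℕ}

theorem InternallyDisjointPaths.symm (h : InternallyDisjointPaths G u v c) :
    InternallyDisjointPaths G v u c := by
  obtain ⟨p, hinj, hpath, hdisj⟩ := h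
  refine ⟨fun i => (p i).reverse, fun i j hij => hinj (Walk.reverse_injective hij),
    fun i => (hpath i).reverse, fun i j hij w hwi hwj => ?_⟩
  simp only [Walk.support_reverse, List.mem_reverse] at hwi hwj
  exact (hdisj i j hij w hwi hwj).symm

theorem localConn_comm [DecidableEq W] (G : SimpleGraph W) (u v : W) :
    localConn G u v = localConn G v u := by
  have hset : {c | InternallyDisjointPaths G u v c} = {c | InternallyDisjointPaths G v u c} :=
    Set.ext fun _ => ⟨.symm, .symm⟩
  simp only [localConn, eq_comm (a := u), hset]

theorem internallyDisjointPaths_of_injective {ι : Type*} [Fintype ι] (p : ι → G.Walk u v)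
    (hinj : Function.Injective p) (hpath : ∀ i, (p i).IsPath)
    (hdisj : ∀ i j, i ≠ j → ∀ w ∈ (p i).support, w ∈ (p j).support → w = u ∨ w = v) :
    InternallyDisjointPaths G u v (Fintype.card ι) := by
  let e := (Fintype.equivFin ι).symm
  exact ⟨p ∘ e, hinj.comp e.injective, fun i => hpath _,
    fun i j hij => hdisj _ _ (e.injective.ne hij)⟩

theorem internallyDisjointPaths_of_commonNeighbors {ι : Type*} [Fintype ι] (huv : u ≠ v)
    (f : ι → W) (hf : Function.Injective f) (hu : ∀ i, G.Adj u (f i))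
    (hv : ∀ i, G.Adj (f i) v) :
    InternallyDisjointPaths G u v (Fintype.card ι) := by
  refine internallyDisjointPaths_of_injective (fun i => .cons (hu i) (.cons (hv i) .nil))
    (fun i j hij => hf ?_) (fun i => ?_) (fun i j hij w hwi hwj => ?_)
  · simpa using congrArg Walk.support hij
  · simp [Walk.isPath_def, (hu i).ne, (hv i).ne, huv]
  · simp only [Walk.support_cons, Walk.support_nil, List.mem_cons, List.not_mem_nil,
      or_false] at hwi hwj
    rcases hwi with rfl | rfl | rfl <;> rcases hwj with h | h | h <;> simp_all [hf.eq_iff]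

/-- Every one of the paths leaves `u` through its own neighbour: only the path consisting of
the edge `uv`, if there is one, can start with `v`. -/
theorem InternallyDisjointPaths.le_ncard_neighborSet [Finite W]
    (h : InternallyDisjointPaths G u v c) (huv : u ≠ v) : c ≤ (G.neighborSet u).ncard := by
  obtain ⟨p, hinj, hpath, hdisj⟩ := h
  have hnil : ∀ i, ¬(p i).Nil := fun i => Walk.not_nil_of_ne huv
  let f : Fin c → G.neighborSet u := fun i => ⟨(p i).snd, (p i).adj_snd (hnil i)⟩
  suffices Function.Injective f by
    simpa [← Nat.card_coe_set_eq] using Nat.card_le_card_of_injective f this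
  intro i j hij
  by_contra hne
  have hsnd : (p i).snd = (p j).snd := congrArg Subtype.val hij
  have hmem : ∀ l, (p l).snd ∈ (p l).support :=
    fun l => List.mem_of_mem_tail (Walk.snd_mem_tail_support (hnil l))
  rcases hdisj i j hne _ (hmem i) (hsnd ▸ hmem j) with hu | hv
  · exact G.irrefl (hu ▸ (p i).adj_snd (hnil i))
  · obtain ⟨_, hi⟩ := (hpath i).eq_cons_nil_of_snd_eq huv hv
    obtain ⟨_, hj⟩ := (hpath j).eq_cons_nil_of_snd_eq huv (hsnd ▸ hv)
    exact hne (hinj (hi.trans hj.symm))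

theorem localConn_eq_of_internallyDisjointPaths [Finite W] [DecidableEq W] (huv : u ≠ v)
    (hN : (G.neighborSet u).ncard = c) (h : InternallyDisjointPaths G u v c) :
    localConn G u v = c := by
  have hub : ∀ j ∈ {c | InternallyDisjointPaths G u v c}, j ≤ c :=
    fun j hj => hN ▸ hj.le_ncard_neighborSet huv
  rw [localConn, if_neg huv]
  exact IsGreatest.csSup_eq ⟨h, hub⟩

end Paths

section PositiveEigenvector

variable {ι : Type*} [Fintype ι] [DecidableEq ι] {A : Matrix ι ι ℝ} {x : ι → ℝ} {r : ℝ}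

/-- Compare an eigenvector `y` with `x` at an index maximising `|y i| / x i`. -/
theorem abs_le_of_hasEigenvalue_of_pos_eigenvector (hA : ∀ i j, 0 ≤ A i j)
    (hx : ∀ i, 0 < x i) (hAx : A *ᵥ x = r • x) {μ : ℝ}
    (hμ : Module.End.HasEigenvalue (toLin' A) μ) : |μ| ≤ r := by
  obtain ⟨y, hy⟩ := hμ.exists_hasEigenvector
  have hAy : A *ᵥ y = μ • y := by rw [← toLin'_apply]; exact hy.apply_eq_smul
  obtain ⟨j, hj⟩ := Function.ne_iff.1 hy.2
  obtain ⟨i, -, hi⟩ := Finset.exists_max_image univ (fun l => |y l| / x l) ⟨j, mem_univ j⟩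
  set c := |y i| / x i
  have hyc : ∀ l, |y l| ≤ c * x l := fun l => (div_le_iff₀ (hx l)).1 (hi l (mem_univ l))
  have hyi : |y i| = c * x i := (div_mul_cancel₀ _ (hx i).ne').symm
  have hc : 0 < c := lt_of_lt_of_le (div_pos (abs_pos.2 hj) (hx j)) (hi j (mem_univ j))
  have hbound : |μ| * |y i| ≤ r * |y i| :=
    calc |μ| * |y i| = |∑ l, A i l * y l| := by
          rw [← abs_mul, ← smul_eq_mul, ← Pi.smul_apply, ← hAy]; rfl
      _ ≤ ∑ l, A i l * |y l| := by
          refine (abs_sum_le_sum_abs _ _).trans_eq (sum_congr rfl fun l _ => ?_)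
          rw [abs_mul, abs_of_nonneg (hA i l)]
      _ ≤ ∑ l, A i l * (c * x l) :=
          sum_le_sum fun l _ => mul_le_mul_of_nonneg_left (hyc l) (hA i l)
      _ = c * (A *ᵥ x) i := by
          simp only [mulVec, dotProduct, mul_sum]
          exact sum_congr rfl fun l _ => by ring
      _ = r * |y i| := by rw [hAx, Pi.smul_apply, smul_eq_mul, hyi]; ring
  exact le_of_mul_le_mul_right hbound (hyi ▸ mul_pos hc (hx i))

theorem specRad_eq_of_pos_eigenvector [Nonempty ι] (hA : ∀ i j, 0 ≤ A i j)
    (hx : ∀ i, 0 < x i) (hAx : A *ᵥ x = r • x) : specRad A = r := by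
  have hx0 : x ≠ 0 := fun h => (hx (Classical.arbitrary ι)).ne' (congrFun h _)
  have hr : Module.End.HasEigenvalue (toLin' A) r :=
    Module.End.hasEigenvalue_of_hasEigenvector
      ⟨Module.End.mem_eigenspace_iff.2 (by rw [toLin'_apply]; exact hAx), hx0⟩
  have habs : |r| = r := le_antisymm (abs_le_of_hasEigenvalue_of_pos_eigenvector hA hx hAx hr)
    (le_abs_self r)
  refine IsGreatest.csSup_eq ⟨⟨r, hr, habs.symm⟩, ?_⟩
  rintro _ ⟨μ, hμ, rfl⟩
  exact abs_le_of_hasEigenvalue_of_pos_eigenvector hA hx hAx hμ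

end PositiveEigenvector

theorem avgConnMatrix_nonneg (G : SimpleGraph V) (u v : V) : 0 ≤ avgConnMatrix G u v :=
  div_nonneg (Nat.cast_nonneg _) (Nat.cast_nonneg _)

theorem sum_ite_eq_zero_const {ι R : Type*} [Fintype ι] [DecidableEq ι] [Ring R] (a : ι)
    (x : R) : ∑ i, (if a = i then 0 else x) = ((Fintype.card ι : R) - 1) * x := by
  have : ∀ i, (if a = i then 0 else x) = x - if a = i then x else 0 := fun i => by
    split_ifs <;> simp
  simp [this, sum_sub_distrib, sub_mul]

section CompleteBipartite

variable {α β : Type*}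

theorem ncard_neighborSet_inl [Fintype β] (a : α) :
    ((completeBipartiteGraph α β).neighborSet (.inl a)).ncard = Fintype.card β := by
  have : (completeBipartiteGraph α β).neighborSet (.inl a) = Set.range Sum.inr := by
    ext (_ | _) <;> simp
  rw [this, Set.ncard_range_of_injective Sum.inr_injective, Nat.card_eq_fintype_card]

theorem ncard_neighborSet_inr [Fintype α] (b : β) :
    ((completeBipartiteGraph α β).neighborSet (.inr b)).ncard = Fintype.card α := by
  have : (completeBipartiteGraph α β).neighborSet (.inr b) = Set.range Sum.inl := by
    ext (_ | _) <;> simp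
  rw [this, Set.ncard_range_of_injective Sum.inl_injective, Nat.card_eq_fintype_card]

theorem localConn_inl_inl [Fintype α] [Fintype β] [DecidableEq α] [DecidableEq β] (a a' : α) :
    localConn (completeBipartiteGraph α β) (.inl a) (.inl a') =
      if a = a' then 0 else Fintype.card β := by
  split_ifs with h
  · simp [localConn, h]
  · have huv : (Sum.inl a : α ⊕ β) ≠ .inl a' := by simpa using h
    exact localConn_eq_of_internallyDisjointPaths huv (ncard_neighborSet_inl _) <|
      internallyDisjointPaths_of_commonNeighbors huv Sum.inr Sum.inr_injective
      (by simp) (by simp)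

theorem localConn_inr_inr [Fintype α] [Fintype β] [DecidableEq α] [DecidableEq β] (b b' : β) :
    localConn (completeBipartiteGraph α β) (.inr b) (.inr b') =
      if b = b' then 0 else Fintype.card α := by
  split_ifs with h
  · simp [localConn, h]
  · have huv : (Sum.inr b : α ⊕ β) ≠ .inr b' := by simpa using h
    exact localConn_eq_of_internallyDisjointPaths huv (ncard_neighborSet_inr _) <|
      internallyDisjointPaths_of_commonNeighbors huv Sum.inl Sum.inl_injective
      (by simp) (by simp)

/-- Route the `i`-th path through `inl i`, entering it from `inr (g i)` for an injection
`g : α → β` with `g a = b`; the path through `inl a` is the edge itself. -/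
theorem internallyDisjointPaths_inl_inr [Fintype α] [DecidableEq α] [DecidableEq β] (e : α ↪ β)
    (a : α) (b : β) :
    InternallyDisjointPaths (completeBipartiteGraph α β) (.inl a) (.inr b) (Fintype.card α) := by
  let g : α → β := Equiv.swap (e a) b ∘ e
  have hg : Function.Injective g := (Equiv.injective _).comp e.injective
  have hgb : ∀ i, g i = b ↔ i = a := fun i => by
    rw [← hg.eq_iff]
    simp [g]
  let p : α → (completeBipartiteGraph α β).Walk (.inl a) (.inr b) := fun i =>
    if i = a then .cons (by simp) .nil
    else .cons (v := .inr (g i)) (by simp) (.cons (v := .inl i) (by simp) (.cons (by simp) .nil))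
  have hsupp : ∀ i, (p i).support =
      if i = a then [.inl a, .inr b] else [.inl a, .inr (g i), .inl i, .inr b] := fun i => by
    by_cases h : i = a <;> simp [p, h]
  refine internallyDisjointPaths_of_injective p (fun i j hij => ?_) (fun i => ?_)
    (fun i j hij w hwi hwj => ?_)
  · have := congrArg Walk.support hij
    rw [hsupp, hsupp] at this
    by_cases hi : i = a <;> by_cases hj : j = a <;> simp_all
  · rw [Walk.isPath_def, hsupp]
    by_cases hi : i = a
    · simp [hi]
    · simp [hi, hgb, Ne.symm hi]
  · rw [hsupp] at hwi hwj
    by_cases hi : i = a <;> by_cases hj : j = a <;> simp_all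
    rcases hwi with rfl | rfl | rfl | rfl <;> simp_all [hg.eq_iff]

theorem localConn_inr_inl [Fintype α] [Fintype β] [DecidableEq α] [DecidableEq β]
    (h : Fintype.card α ≤ Fintype.card β) (a : α) (b : β) :
    localConn (completeBipartiteGraph α β) (.inr b) (.inl a) = Fintype.card α := by
  obtain ⟨e⟩ := Function.Embedding.nonempty_of_card_le h
  exact localConn_eq_of_internallyDisjointPaths (by simp) (ncard_neighborSet_inr b)
    (internallyDisjointPaths_inl_inr e a b).symm

theorem localConn_inl_inr [Fintype α] [Fintype β] [DecidableEq α] [DecidableEq β]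
    (h : Fintype.card α ≤ Fintype.card β) (a : α) (b : β) :
    localConn (completeBipartiteGraph α β) (.inl a) (.inr b) = Fintype.card α := by
  rw [localConn_comm, localConn_inr_inl h]

theorem avgConnMatrix_completeBipartiteGraph_mulVec_elim [Fintype α] [Fintype β]
    [DecidableEq α] [DecidableEq β] (h : Fintype.card α ≤ Fintype.card β) (y z : ℝ) :
    avgConnMatrix (completeBipartiteGraph α β) *ᵥ Sum.elim (fun _ => y) (fun _ => z) =
      Sum.elim
        (fun _ => (((Fintype.card α : ℝ) - 1) * Fintype.card β * y +
          Fintype.card α * Fintype.card β * z) / (Fintype.card (α ⊕ β)).choose 2)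
        (fun _ => ((Fintype.card α : ℝ) ^ 2 * y +
          Fintype.card α * ((Fintype.card β : ℝ) - 1) * z) / (Fintype.card (α ⊕ β)).choose 2) := by
  ext (a | b) <;>
  simp only [mulVec, dotProduct, avgConnMatrix, Fintype.sum_sum_type, of_apply, Sum.elim_inl,
    Sum.elim_inr, localConn_inl_inl, localConn_inr_inr, localConn_inl_inr h, localConn_inr_inl h,
    Nat.cast_ite, Nat.cast_zero, ite_div, zero_div, ite_mul, zero_mul, sum_ite_eq_zero_const,
    Finset.sum_const, Finset.card_univ, nsmul_eq_mul] <;>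
  ring

theorem specRad_avgConnMatrix_completeBipartiteGraph_of_quotient [Fintype α] [Fintype β]
    [DecidableEq α] [DecidableEq β] [Nonempty α] (h : Fintype.card α ≤ Fintype.card β)
    {lam y z : ℝ} (hy : 0 < y) (hz : 0 < z)
    (hrow_inl : ((Fintype.card α : ℝ) - 1) * Fintype.card β * y +
      Fintype.card α * Fintype.card β * z = lam * y)
    (hrow_inr : (Fintype.card α : ℝ) ^ 2 * y +
      Fintype.card α * ((Fintype.card β : ℝ) - 1) * z = lam * z) :
    specRad (avgConnMatrix (completeBipartiteGraph α β)) =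
      lam / (Fintype.card (α ⊕ β)).choose 2 := by
  refine specRad_eq_of_pos_eigenvector (avgConnMatrix_nonneg _) (x := Sum.elim (fun _ => y)
    (fun _ => z)) (by rintro (_ | _) <;> assumption) ?_
  rw [avgConnMatrix_completeBipartiteGraph_mulVec_elim h]
  ext (_ | _) <;>
    simp only [Sum.elim_inl, Sum.elim_inr, Pi.smul_apply, smul_eq_mul, hrow_inl, hrow_inr] <;>
    ring

theorem specRad_avgConnMatrix_completeBipartiteGraph [Fintype α] [Fintype β] [DecidableEq α]
    [DecidableEq β] [Nonempty α] (h : Fintype.card α ≤ Fintype.card β) :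
    specRad (avgConnMatrix (completeBipartiteGraph α β)) =
      (2 * Fintype.card α * Fintype.card β - Fintype.card α - Fintype.card β +
        √(((Fintype.card α : ℝ) - Fintype.card β) ^ 2 +
          4 * (Fintype.card α : ℝ) ^ 3 * Fintype.card β)) /
      ((Fintype.card α + Fintype.card β) * ((Fintype.card α : ℝ) + Fintype.card β - 1)) := by
  have hK : (1 : ℝ) ≤ Fintype.card α := Nat.one_le_cast.2 Fintype.card_pos
  have hR : (Fintype.card α : ℝ) ≤ Fintype.card β := Nat.cast_le.2 h
  set K : ℝ := (Fintype.card α : ℝ) with hKdef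
  set R : ℝ := (Fintype.card β : ℝ) with hRdef
  set s := √((K - R) ^ 2 + 4 * K ^ 3 * R)
  have hs : s ^ 2 = (K - R) ^ 2 + 4 * K ^ 3 * R := Real.sq_sqrt (by positivity)
  have hspos : 0 < s := Real.sqrt_pos.2 <|
    add_pos_of_nonneg_of_pos (sq_nonneg _) (by have := pow_pos (by linarith : 0 < K) 3; nlinarith)
  -- the Perron root and a positive eigenvector of `!![(K - 1) * R, K * R; K ^ 2, K * (R - 1)]`
  rw [specRad_avgConnMatrix_completeBipartiteGraph_of_quotient h
    (lam := (2 * K * R - K - R + s) / 2) (y := K * R) (z := (R - K + s) / 2)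
    (mul_pos (by linarith) (by linarith)) (by linarith) (by ring)
    (by linear_combination (-1 / 4 : ℝ) * hs), Nat.cast_choose_two, Fintype.card_sum,
    Nat.cast_add, ← hKdef, ← hRdef]
  field_simp

end CompleteBipartite

/-- For `K_{k,n-k}` with `1 ≤ k ≤ n-k`, the spectral radius of the average
connectivity matrix equals
`(1/(n(n-1)))(√(n² + 4nk³ - 4nk - 4k⁴ + 4k²) + 2nk - n - 2k²)`. -/
theorem stmt12 (n k : ℕ) (hk : 1 ≤ k) (hkn : k + k ≤ n) :
    specRad (avgConnMatrix (completeBipartiteGraph (Fin k) (Fin (n - k)))) =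
      (1 / ((n : ℝ) * ((n : ℝ) - 1))) *
        (Real.sqrt ((n : ℝ) ^ 2 + 4 * n * k ^ 3 - 4 * n * k - 4 * (k : ℝ) ^ 4 + 4 * k ^ 2) +
          2 * n * k - n - 2 * (k : ℝ) ^ 2) := by
  have : Nonempty (Fin k) := ⟨⟨0, hk⟩⟩
  rw [specRad_avgConnMatrix_completeBipartiteGraph (by simp only [Fintype.card_fin]; omega)]
  simp only [Fintype.card_fin]
  rw [Nat.cast_sub (by omega : k ≤ n)]
  have hdisc : ((k : ℝ) - (n - k)) ^ 2 + 4 * (k : ℝ) ^ 3 * (n - k) =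
      (n : ℝ) ^ 2 + 4 * n * k ^ 3 - 4 * n * k - 4 * (k : ℝ) ^ 4 + 4 * k ^ 2 := by ring
  rw [hdisc]
  ring

end AvgConn
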